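/- arXiv:2312.05964 — 2 statements merged into one kernel-verified Lean document; each statement's English description precedes it below -/
import Mathlib

section
/- Let ι be a type of variable indices and consider a finite group of rules g, where each rule r ∈ g has an output index o r : ι, an antecedent predicate A r : (ι → Bool) → Bool, and an output value α r : Bool. Assume (i) the map r ↦ o r is injective on g, and (ii) each antecedent is independent of all outputs of the group: for every rule r ∈ g and all states v, v' : ι → Bool that agree on every index outside the set O = {o r' : r' ∈ g}, one has A r v = A r v'. Then for every state v : ι → Bool and every ordering r_1, …, r_n of the rules of g, sequentially applying the single-rule updates (where applying rule r to state u sets coordinate o r to α r if A r u holds and leaves all other coordinates unchanged) yields the same final state, namely the simultaneous update v* defined by v* (o r) = (if A r v then α r else v (o r)) for r ∈ g and v* j = v j for j ∉ O. -/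
/-!
Applying a rule only writes its own output coordinate. Hence a coordinate outside the outputs
of the rules applied so far is untouched; in particular every intermediate state agrees with `v`
off the output set, so each antecedent evaluates as on `v`. Since outputs are distinct, when rule
`r` fires its coordinate `o r` still holds `v (o r)`, and no later rule overwrites it.
-/

section FoldlUpdate

variable {ι ρ β : Type*} [DecidableEq ι] (o : ρ → ι) (f : ρ → (ι → β) → β)

theorem foldl_update_apply_of_not_mem (L : List ρ) (u : ι → β) {j : ι} (hj : j ∉ L.map o) :
    L.foldl (fun u r => Function.update u (o r) (f r u)) u j = u j := by
  induction L generalizing u with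
  | nil => rfl
  | cons r L ih =>
    rw [List.map_cons, List.mem_cons, not_or] at hj
    rw [List.foldl_cons, ih _ hj.2, Function.update_of_ne hj.1]

theorem foldl_update_append_cons_apply (L₁ L₂ : List ρ) (r : ρ) (u : ι → β)
    (hr : o r ∉ L₂.map o) :
    (L₁ ++ r :: L₂).foldl (fun u r => Function.update u (o r) (f r u)) u (o r) =
      f r (L₁.foldl (fun u r => Function.update u (o r) (f r u)) u) := by
  rw [List.foldl_append, List.foldl_cons, foldl_update_apply_of_not_mem o f L₂ _ hr,
    Function.update_self]

end FoldlUpdate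

/-- For a group `g` of rules with pairwise distinct output
indices (`o` injective on `g`) whose antecedents `A r` do not depend on any
output index of the group, sequentially applying the single-rule updates in
any order (any duplicate-free list enumerating `g`) yields the simultaneous
update `v*`, where `v* (o r) = if A r v then α r else v (o r)` for `r ∈ g`
and `v* j = v j` for `j` outside the output set. -/
theorem sequential_eq_simultaneous {ι ρ : Type*} [DecidableEq ι]
    (g : Finset ρ) (o : ρ → ι) (A : ρ → (ι → Bool) → Bool) (α : ρ → Bool)
    (hinj : Set.InjOn o g)
    (hind : ∀ r ∈ g, ∀ v v' : ι → Bool,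
      (∀ j : ι, (∀ r' ∈ g, o r' ≠ j) → v j = v' j) → A r v = A r v')
    (v : ι → Bool)
    (L : List ρ) (hnd : L.Nodup) (hLg : ∀ r, r ∈ L ↔ r ∈ g)
    (vstar : ι → Bool)
    (hout : ∀ r ∈ g, vstar (o r) = if A r v then α r else v (o r))
    (hoff : ∀ j : ι, (∀ r ∈ g, o r ≠ j) → vstar j = v j) :
    L.foldl
      (fun u r => Function.update u (o r) (if A r u then α r else u (o r)))
      v = vstar := by
  set f : ρ → (ι → Bool) → Bool := fun r u => if A r u then α r else u (o r)
  have not_mem_map {j : ι} (hj : ∀ r ∈ g, o r ≠ j) (M : List ρ) (hM : ∀ r ∈ M, r ∈ g) :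
      j ∉ M.map o := by
    simpa only [List.mem_map, not_exists, not_and] using fun r hr => hj r (hM r hr)
  funext j
  by_cases hj : ∃ r ∈ g, o r = j
  · obtain ⟨r, hr, rfl⟩ := hj
    obtain ⟨L₁, L₂, rfl⟩ := List.append_of_mem ((hLg r).2 hr)
    have hmap : (L₁ ++ r :: L₂).map o |>.Nodup :=
      hnd.map_on fun x hx y hy => hinj ((hLg x).1 hx) ((hLg y).1 hy)
    rw [List.map_append, List.map_cons, List.nodup_middle, List.nodup_cons, List.mem_append,
      not_or] at hmap
    have hAr : A r (L₁.foldl (fun u r => Function.update u (o r) (f r u)) v) = A r v :=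
      hind r hr _ _ fun j hj => foldl_update_apply_of_not_mem o f L₁ v
        (not_mem_map hj L₁ fun x hx => (hLg x).1 (by simp [hx]))
    rw [hout r hr, foldl_update_append_cons_apply o f L₁ L₂ r v hmap.1.2]
    simp only [f, hAr, foldl_update_apply_of_not_mem o f L₁ v hmap.1.1]
  · push Not at hj
    rw [foldl_update_apply_of_not_mem o f L v (not_mem_map hj L fun x => (hLg x).1), hoff j hj]
end

section
/- Let ι be a type of variable indices and consider a finite group of rules g, where each rule r ∈ g has an output index o r : ι, an antecedent predicate A r : (ι → Bool) → Bool, and an output value α r : Bool. Assume (i) the map r ↦ o r is injective on g, and (ii) for every rule r ∈ g and all states v, v' : ι → Bool that agree on every index outside the set O = {o r' : r' ∈ g}, one has A r v = A r v'. Then the simultaneous update v* of any state v (defined by v* (o r) = (if A r v then α r else v (o r)) for r ∈ g and v* j = v j for j ∉ O) satisfies every rule of the group: for every r ∈ g, if A r v* holds then v* (o r) = α r. In particular, the output of the constraint module has zero hard-rule violations. -/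
theorem simultaneous_update_satisfies_general {ι ρ : Type*}
    (g : Finset ρ) (o : ρ → ι) (A : ρ → (ι → Bool) → Bool) (α : ρ → Bool)
    (hind : ∀ r ∈ g, ∀ v v' : ι → Bool,
      (∀ j : ι, (∀ r' ∈ g, o r' ≠ j) → v j = v' j) → A r v = A r v')
    (v vstar : ι → Bool)
    (hout : ∀ r ∈ g, vstar (o r) = if A r v then α r else v (o r))
    (hoff : ∀ j : ι, (∀ r ∈ g, o r ≠ j) → vstar j = v j) :
    ∀ r ∈ g, A r vstar = true → vstar (o r) = α r := by
  intro r hr hA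
  have hAv : A r v = true := (hind r hr v vstar fun j hj => (hoff j hj).symm).trans hA
  simp [hout r hr, hAv]

/-- For a group `g` of rules with pairwise distinct output
indices whose antecedents do not depend on the group's output indices, the
simultaneous update `v*` of any state `v` satisfies every rule of the group:
if `A r v*` holds then `v* (o r) = α r`. -/
theorem simultaneous_update_satisfies {ι ρ : Type*} [DecidableEq ι]
    (g : Finset ρ) (o : ρ → ι) (A : ρ → (ι → Bool) → Bool) (α : ρ → Bool)
    (hinj : Set.InjOn o g)
    (hind : ∀ r ∈ g, ∀ v v' : ι → Bool,
      (∀ j : ι, (∀ r' ∈ g, o r' ≠ j) → v j = v' j) → A r v = A r v')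
    (v vstar : ι → Bool)
    (hout : ∀ r ∈ g, vstar (o r) = if A r v then α r else v (o r))
    (hoff : ∀ j : ι, (∀ r ∈ g, o r ≠ j) → vstar j = v j) :
    ∀ r ∈ g, A r vstar = true → vstar (o r) = α r :=
  simultaneous_update_satisfies_general g o A α hind v vstar hout hoff
end
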